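/- arXiv:2009.09113 — 2 statements merged into one kernel-verified Lean document; each statement's English description precedes it below -/
import Mathlib

section
/- The edge set of every locally finite Borel graph 𝒢 = (V, E, 𝓑) can be partitioned into countably many Borel matchings. -/
/-!
By the Lusin–Novikov theorem for finite sections, the edge set is a countable union of Borel
graphs `F` of partial functions. Fixing a Borel embedding `e : V → ℝ`, for two such graphs
`F, F'` and a rational `q`, the edges `(x, y)` with `(x, y) ∈ F`, `(y, x) ∈ F'` and
`e x < q < e y`, together with their reverses, form a Borel matching: no vertex can be both a
left endpoint (`e x < q`) and a right one (`e y > q`). Countably many such matchings cover every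
edge, and `disjointed` makes them pairwise disjoint.

For Lusin–Novikov, the analytic sets `{x | m ≤ #E_x}` have empty intersection, so by Novikov's
separation theorem they lie in Borel sets `B m` with empty intersection. Off `B m` the sections
have at most `m` points; there, the increasing enumeration of a maximal section is unique, so
Lusin–Souslin makes its coordinates Borel graphs, and induction on `m` handles the rest.
-/

open Set Function MeasureTheory PiNat

section Separation

variable {α ι : Type*} [MeasurableSpace α]

def MeasurablySeparableFamily (s : ι → Set α) : Prop :=
  ∃ B : ι → Set α, (∀ i, MeasurableSet (B i)) ∧ (∀ i, s i ⊆ B i) ∧ ⋂ i, B i = ∅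

namespace MeasurablySeparableFamily

variable {s : ι → Set α}

lemma of_eq_empty {i : ι} (hi : s i = ∅) : MeasurablySeparableFamily s := by
  classical
  refine ⟨fun j => if j = i then ∅ else univ, fun j => ?_, fun j => ?_, ?_⟩
  · dsimp only
    split_ifs <;> simp
  · dsimp only
    split_ifs with hj
    · simp [hj, hi]
    · exact subset_univ _
  · exact eq_empty_of_subset_empty ((iInter_subset _ i).trans (by simp))

lemma of_measurablySeparable {i j : ι} (hij : i ≠ j) (h : MeasurablySeparable (s i) (s j)) :
    MeasurablySeparableFamily s := by
  classical
  obtain ⟨u, hsu, hsu', hu⟩ := h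
  refine ⟨fun k => if k = i then u else if k = j then uᶜ else univ, fun k => ?_, fun k => ?_, ?_⟩
  · dsimp only
    split_ifs <;> simp [hu]
  · dsimp only
    split_ifs with hki hkj
    · exact hki ▸ hsu
    · exact hkj ▸ hsu'.subset_compl_right
    · exact subset_univ _
  · refine eq_empty_of_subset_empty fun x hx => ?_
    have hxi := mem_iInter.1 hx i
    have hxj := mem_iInter.1 hx j
    simp only [if_neg hij.symm] at hxi hxj
    exact hxj hxi

/- If `B c` separates the family with `s k` replaced by `D c`, then `⋃ c, B c k` at `k` and
`⋂ c, (B c k)ᶜ ∪ B c i` at `i ≠ k` separate `s`. -/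
lemma of_update [DecidableEq ι] {κ : Type*} [Countable κ] {k : ι} {D : κ → Set α}
    (hD : s k ⊆ ⋃ c, D c) (h : ∀ c, MeasurablySeparableFamily (update s k (D c))) :
    MeasurablySeparableFamily s := by
  choose B hBm hsB hB using h
  refine ⟨update (fun i => ⋂ c, (B c k)ᶜ ∪ B c i) k (⋃ c, B c k), fun i => ?_, fun i => ?_, ?_⟩
  · rcases eq_or_ne i k with rfl | hi
    · simpa using MeasurableSet.iUnion fun c => hBm c i
    · simpa [hi] using MeasurableSet.iInter fun c => (hBm c k).compl.union (hBm c i)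
  · rcases eq_or_ne i k with rfl | hi
    · simpa using hD.trans (iUnion_mono fun c => by simpa using hsB c i)
    · have hsB' (c : κ) : s i ⊆ B c i := by simpa [hi] using hsB c i
      simpa [hi] using fun c => (hsB' c).trans subset_union_right
  · refine eq_empty_of_forall_notMem fun x hx => ?_
    obtain ⟨c, hc⟩ := mem_iUnion.1 (by simpa using mem_iInter.1 hx k)
    have : x ∈ ⋂ i, B c i := mem_iInter.2 fun i => by
      rcases eq_or_ne i k with rfl | hi
      · exact hc
      · have := mem_iInter.1 hx i
        simp only [update_of_ne hi, mem_iInter, mem_union, mem_compl_iff] at this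
        exact (this c).resolve_left (not_not.2 hc)
    simp [hB c] at this

end MeasurablySeparableFamily

end Separation

/- Through `Nat.pair`, a point `z` of Baire space codes the sequence of points
`fun n j ↦ z (Nat.pair n j)`; `pairCylinder z L n` is the `n`-th projection of `cylinder z L`. -/
def pairCylinder (z : ℕ → ℕ) (L n : ℕ) : Set (ℕ → ℕ) :=
  {w | ∀ j, Nat.pair n j < L → w j = z (Nat.pair n j)}

@[simp]
lemma pairCylinder_zero (z : ℕ → ℕ) (n : ℕ) : pairCylinder z 0 n = univ := by
  simp [pairCylinder]

lemma pairCylinder_congr {z z' : ℕ → ℕ} {L : ℕ} (h : ∀ m < L, z' m = z m) (n : ℕ) :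
    pairCylinder z' L n = pairCylinder z L n := by
  ext w
  exact forall_congr' fun j => imp_congr_right fun hj => by rw [h _ hj]

lemma pairCylinder_succ_of_ne (z : ℕ → ℕ) {L n : ℕ} (hn : n ≠ (Nat.unpair L).1) :
    pairCylinder z (L + 1) n = pairCylinder z L n := by
  ext w
  refine forall_congr' fun j => imp_congr_left ?_
  have : Nat.pair n j ≠ L := by rintro rfl; simp at hn
  omega

lemma iUnion_pairCylinder_update (z : ℕ → ℕ) (L : ℕ) :
    ⋃ i, pairCylinder (update z L i) (L + 1) (Nat.unpair L).1 =
      pairCylinder z L (Nat.unpair L).1 := by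
  refine Subset.antisymm (iUnion_subset fun i w hw j hj => ?_)
    fun w hw => mem_iUnion.2 ⟨w (Nat.unpair L).2, fun j hj => ?_⟩
  · rw [hw j (by omega), update_of_ne hj.ne]
  · rcases Nat.lt_succ_iff_lt_or_eq.1 hj with hj | hj
    · rw [update_of_ne hj.ne, hw j hj]
    · rw [hj, update_self, ← hj, Nat.unpair_pair]

lemma pairCylinder_subset_cylinder {z : ℕ → ℕ} {L n N : ℕ} (h : Nat.pair n N ≤ L) :
    pairCylinder z L n ⊆ cylinder (fun j => z (Nat.pair n j)) N :=
  fun _ hw j hj => hw j ((Nat.pair_lt_pair_right n hj).trans_le h)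

lemma exists_forall_of_exists_update {P : ℕ → (ℕ → ℕ) → Prop}
    (hP : ∀ L z z', (∀ m < L, z' m = z m) → P L z → P L z') (h0 : P 0 0)
    (step : ∀ L z, P L z → ∃ i, P (L + 1) (update z L i)) : ∃ z, ∀ L, P L z := by
  choose! i hi using step
  let s : ℕ → ℕ → ℕ := fun L => Nat.rec 0 (fun L z => update z L (i L z)) L
  have hs : ∀ L, P L (s L) := fun L => Nat.rec h0 (fun L ih => hi L _ ih) L
  have hstable : ∀ m L, m < L → s L m = s (m + 1) m := fun m => Nat.le_induction rfl
    fun L hL ih => by rw [← ih]; exact update_of_ne (by omega) _ _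
  exact ⟨fun m => s (m + 1) m, fun L => hP L _ _ (fun m hm => (hstable m L hm).symm) (hs L)⟩

lemma exists_cylinder_subset {x : ℕ → ℕ} {U : Set (ℕ → ℕ)} (hU : IsOpen U) (hx : x ∈ U) :
    ∃ N, cylinder x N ⊆ U := by
  obtain ⟨_, ⟨y, N, rfl⟩, hxy, hyU⟩ :=
    (isTopologicalBasis_cylinders fun _ => ℕ).exists_subset_of_mem_open hx hU
  exact ⟨N, by rwa [mem_cylinder_iff_eq.1 hxy]⟩

section Novikov

variable {α : Type*} [MeasurableSpace α]

lemma exists_update_not_measurablySeparableFamily {f : ℕ → (ℕ → ℕ) → α} {z : ℕ → ℕ} {L : ℕ}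
    (h : ¬MeasurablySeparableFamily fun n => f n '' pairCylinder z L n) :
    ∃ i, ¬MeasurablySeparableFamily fun n => f n '' pairCylinder (update z L i) (L + 1) n := by
  classical
  by_contra! H
  refine h (.of_update (k := (Nat.unpair L).1)
    (D := fun i => f _ '' pairCylinder (update z L i) (L + 1) _)
    (by rw [← image_iUnion, iUnion_pairCylinder_update]) fun i => ?_)
  convert H i using 1
  ext1 n
  rcases eq_or_ne n (Nat.unpair L).1 with rfl | hn
  · simp
  · rw [update_of_ne hn, pairCylinder_succ_of_ne _ hn,
      pairCylinder_congr (z' := update z L i) (fun m hm => update_of_ne hm.ne _ _)]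

/- If the ranges were not separated, refining one coordinate at a time gives points `x n` of
Baire space such that the images of the cylinders around them are never separated. Two of the
`f n (x n)` differ, and small cylinders around them map into disjoint open sets. -/
theorem measurablySeparableFamily_range [TopologicalSpace α] [T2Space α]
    [OpensMeasurableSpace α] {f : ℕ → (ℕ → ℕ) → α} (hf : ∀ n, Continuous (f n))
    (h : ⋂ n, range (f n) = ∅) : MeasurablySeparableFamily fun n => range (f n) := by
  by_contra hsep
  obtain ⟨z, hz⟩ : ∃ z, ∀ L, ¬MeasurablySeparableFamily fun n => f n '' pairCylinder z L n :=
    exists_forall_of_exists_update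
      (fun L z z' hzz' => by simp only [pairCylinder_congr hzz', imp_self])
      (by simpa using hsep) fun L z => exists_update_not_measurablySeparableFamily
  set x : ℕ → ℕ → ℕ := fun n j => z (Nat.pair n j)
  obtain ⟨a, b, hab⟩ : ∃ a b, f a (x a) ≠ f b (x b) := by
    by_contra! H
    have : f 0 (x 0) ∈ ⋂ n, range (f n) := mem_iInter.2 fun n => ⟨x n, (H 0 n).symm⟩
    simp [h] at this
  obtain ⟨u, v, hu, hv, hau, hbv, huv⟩ := t2_separation hab
  obtain ⟨Na, hNa⟩ := exists_cylinder_subset (hu.preimage (hf a)) hau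
  obtain ⟨Nb, hNb⟩ := exists_cylinder_subset (hv.preimage (hf b)) hbv
  refine hz (Nat.pair a Na + Nat.pair b Nb) (.of_measurablySeparable (i := a) (j := b)
    (fun h => hab (h ▸ rfl)) ⟨u, ?_, ?_, hu.measurableSet⟩)
  · exact image_subset_iff.2 ((pairCylinder_subset_cylinder (Nat.le_add_right _ _)).trans hNa)
  · exact huv.symm.mono_left (image_subset_iff.2
      ((pairCylinder_subset_cylinder (Nat.le_add_left _ _)).trans hNb))

/-- **Novikov's separation theorem**. -/
theorem MeasureTheory.AnalyticSet.measurablySeparableFamily [TopologicalSpace α] [T2Space α]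
    [OpensMeasurableSpace α] {s : ℕ → Set α} (hs : ∀ n, AnalyticSet (s n))
    (h : ⋂ n, s n = ∅) : MeasurablySeparableFamily s := by
  by_cases hne : ∃ n, s n = ∅
  · exact .of_eq_empty hne.choose_spec
  push Not at hne
  simp_rw [AnalyticSet] at hs
  choose f hf hfs using fun n => (hs n).resolve_left (hne n).ne_empty
  simpa only [hfs] using measurablySeparableFamily_range hf (by simpa only [hfs] using h)

end Novikov

section Tuples

variable {α : Type*} [LinearOrder α] {s : Set α} {m : ℕ}

lemma le_encard_iff_exists_strictMono_fin :
    (m : ℕ∞) ≤ s.encard ↔ ∃ t : Fin m → α, StrictMono t ∧ range t ⊆ s := by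
  refine ⟨fun h => ?_, fun ⟨t, ht, hts⟩ => ?_⟩
  · obtain ⟨u, hus, hu⟩ := exists_subset_encard_eq h
    have hfin : u.Finite := finite_of_encard_eq_coe hu
    have hcard : hfin.toFinset.card = m := by
      rw [hfin.encard_eq_coe_toFinset_card] at hu
      exact_mod_cast hu
    refine ⟨hfin.toFinset.orderEmbOfFin hcard, OrderEmbedding.strictMono _, ?_⟩
    rwa [Finset.range_orderEmbOfFin, Finite.coe_toFinset]
  · simpa using ht.injective.encard_range.trans (encard_le_encard hts)

lemma StrictMono.range_eq_of_encard_le {t : Fin m → α} (ht : StrictMono t) (hts : range t ⊆ s)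
    (hs : s.encard ≤ m) : range t = s :=
  (finite_range t).eq_of_subset_of_encard_le hts
    (hs.trans (by simpa using ht.injective.encard_range))

end Tuples

section Graphs

variable {X Y : Type*} [MeasurableSpace X] [MeasurableSpace Y]

def IsCountableUnionOfMeasurableGraphs (E : Set (X × Y)) : Prop :=
  ∃ 𝓕 : Set (Set (X × Y)), 𝓕.Countable ∧ (∀ F ∈ 𝓕, MeasurableSet F ∧ InjOn Prod.fst F) ∧
    ⋃₀ 𝓕 = E

namespace IsCountableUnionOfMeasurableGraphs

lemma empty : IsCountableUnionOfMeasurableGraphs (∅ : Set (X × Y)) :=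
  ⟨∅, countable_empty, by simp, sUnion_empty⟩

lemma of_injOn {F : Set (X × Y)} (hF : MeasurableSet F) (h : InjOn Prod.fst F) :
    IsCountableUnionOfMeasurableGraphs F :=
  ⟨{F}, countable_singleton F, by simpa using ⟨hF, h⟩, sUnion_singleton F⟩

lemma iUnion {ι : Type*} [Countable ι] {E : ι → Set (X × Y)}
    (h : ∀ i, IsCountableUnionOfMeasurableGraphs (E i)) :
    IsCountableUnionOfMeasurableGraphs (⋃ i, E i) := by
  choose 𝓕 hc h𝓕 hE using h
  refine ⟨⋃ i, 𝓕 i, countable_iUnion hc, fun F hF => ?_, by simp [sUnion_iUnion, hE]⟩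
  obtain ⟨i, hi⟩ := mem_iUnion.1 hF
  exact h𝓕 i F hi

lemma union {E E' : Set (X × Y)} (h : IsCountableUnionOfMeasurableGraphs E)
    (h' : IsCountableUnionOfMeasurableGraphs E') :
    IsCountableUnionOfMeasurableGraphs (E ∪ E') := by
  rw [union_eq_iUnion]
  exact iUnion (Bool.forall_bool.2 ⟨h', h⟩)

lemma preimage_prodMap {Z : Type*} [MeasurableSpace Z] {E : Set (X × Z)}
    (h : IsCountableUnionOfMeasurableGraphs E) {e : Y → Z} (he : Measurable e)
    (hinj : Injective e) : IsCountableUnionOfMeasurableGraphs (Prod.map id e ⁻¹' E) := by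
  obtain ⟨𝓕, hc, h𝓕, rfl⟩ := h
  refine ⟨preimage (Prod.map id e) '' 𝓕, hc.image _, ?_, by simp [sUnion_image, preimage_sUnion]⟩
  rintro _ ⟨F, hF, rfl⟩
  exact ⟨measurable_id.prodMap he (h𝓕 F hF).1,
    fun p hp q hq hpq => injective_id.prodMap hinj ((h𝓕 F hF).2 hp hq hpq)⟩

end IsCountableUnionOfMeasurableGraphs

end Graphs

section Sections

variable {X Y : Type*}

lemma encard_setOf_mem_inter_preimage_fst_le {E : Set (X × Y)} {A : Set X} {n : ℕ∞}
    (h : ∀ x ∈ A, {y | (x, y) ∈ E}.encard ≤ n) (x : X) :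
    {y | (x, y) ∈ E ∩ Prod.fst ⁻¹' A}.encard ≤ n := by
  by_cases hx : x ∈ A
  · simpa [hx] using h x hx
  · simp [hx]

def sectionTuples (E : Set (X × ℝ)) (m : ℕ) : Set (X × (Fin m → ℝ)) :=
  {p | StrictMono p.2 ∧ ∀ i, (p.1, p.2 i) ∈ E}

variable {E : Set (X × ℝ)} {m : ℕ}

lemma measurableSet_sectionTuples [MeasurableSpace X] (hE : MeasurableSet E) (m : ℕ) :
    MeasurableSet (sectionTuples E m) := by
  have hcoord (i : Fin m) : Measurable fun p : X × (Fin m → ℝ) => p.2 i :=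
    (measurable_pi_apply i).comp measurable_snd
  have : sectionTuples E m = (⋂ (i) (j) (_ : i < j), {p | p.2 i < p.2 j}) ∩
      ⋂ i, (fun p => (p.1, p.2 i)) ⁻¹' E := by
    ext
    simp [sectionTuples, StrictMono]
  rw [this]
  exact .inter (.iInter fun i => .iInter fun j => .iInter fun _ =>
    measurableSet_lt (hcoord i) (hcoord j)) (.iInter fun i => measurable_fst.prodMk (hcoord i) hE)

lemma fst_image_sectionTuples :
    Prod.fst '' sectionTuples E m = {x | (m : ℕ∞) ≤ {y | (x, y) ∈ E}.encard} := by
  ext x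
  simp [sectionTuples, le_encard_iff_exists_strictMono_fin, range_subset_iff]

lemma range_eq_of_mem_sectionTuples (hm : ∀ x, {y | (x, y) ∈ E}.encard ≤ m)
    {p : X × (Fin m → ℝ)} (hp : p ∈ sectionTuples E m) : range p.2 = {y | (p.1, y) ∈ E} :=
  hp.1.range_eq_of_encard_le (range_subset_iff.2 hp.2) (hm _)

lemma injOn_fst_sectionTuples (hm : ∀ x, {y | (x, y) ∈ E}.encard ≤ m) :
    InjOn Prod.fst (sectionTuples E m) := by
  rintro ⟨x, t⟩ ht ⟨x', t'⟩ ht' (rfl : x = x')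
  have := (range_eq_of_mem_sectionTuples hm ht).trans (range_eq_of_mem_sectionTuples hm ht').symm
  rw [ht.1.range_inj ht'.1] at this
  exact Prod.ext rfl this

lemma inter_preimage_fst_image_sectionTuples (hm : ∀ x, {y | (x, y) ∈ E}.encard ≤ m) :
    E ∩ Prod.fst ⁻¹' (Prod.fst '' sectionTuples E m) =
      ⋃ i, (fun p => (p.1, p.2 i)) '' sectionTuples E m := by
  ext ⟨x, y⟩
  simp only [mem_inter_iff, mem_preimage, mem_iUnion, mem_image]
  constructor
  · rintro ⟨hxy, ⟨x', t⟩, ht, rfl⟩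
    obtain ⟨i, rfl⟩ : y ∈ range t := (range_eq_of_mem_sectionTuples hm ht).symm ▸ hxy
    exact ⟨i, _, ht, rfl⟩
  · rintro ⟨i, ⟨x', t⟩, ht, h⟩
    obtain ⟨rfl, rfl⟩ := Prod.mk.inj h
    exact ⟨ht.2 i, _, ht, rfl⟩

variable [MeasurableSpace X] [StandardBorelSpace X]

lemma isCountableUnionOfMeasurableGraphs_of_encard_le (n : ℕ) (hE : MeasurableSet E)
    (hn : ∀ x, {y | (x, y) ∈ E}.encard ≤ n) : IsCountableUnionOfMeasurableGraphs E := by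
  induction n generalizing E with
  | zero =>
    convert IsCountableUnionOfMeasurableGraphs.empty
    refine eq_empty_of_forall_notMem fun p hp => ?_
    simpa using (encard_eq_zero.1 (nonpos_iff_eq_zero.1 (hn p.1))).subset hp
  | succ n ih =>
    set T := sectionTuples E (n + 1)
    have hT := measurableSet_sectionTuples hE (n + 1)
    have hinj := injOn_fst_sectionTuples hn
    have hD : MeasurableSet (Prod.fst '' T) := hT.image_of_measurable_injOn measurable_fst hinj
    have hgraph (i : Fin (n + 1)) :
        IsCountableUnionOfMeasurableGraphs ((fun p => (p.1, p.2 i)) '' T) := by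
      refine .of_injOn (hT.image_of_measurable_injOn
        (measurable_fst.prodMk ((measurable_pi_apply i).comp measurable_snd))
        fun p hp q hq hpq => hinj hp hq (by simpa using congrArg Prod.fst hpq)) ?_
      rintro _ ⟨p, hp, rfl⟩ _ ⟨q, hq, rfl⟩ hpq
      rw [hinj hp hq hpq]
    rw [← inter_union_compl E (Prod.fst ⁻¹' (Prod.fst '' T)),
      inter_preimage_fst_image_sectionTuples hn, ← preimage_compl]
    refine (IsCountableUnionOfMeasurableGraphs.iUnion hgraph).union (ih (hE.inter
      (measurable_fst hD.compl)) (encard_setOf_mem_inter_preimage_fst_le fun x hx => ?_))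
    rw [fst_image_sectionTuples] at hx
    exact ENat.lt_natCast_add_one_iff.1 (by simpa using hx)

lemma isCountableUnionOfMeasurableGraphs_of_finite_sections_real
    (hE : MeasurableSet E) (hfin : ∀ x, {y | (x, y) ∈ E}.Finite) :
    IsCountableUnionOfMeasurableGraphs E := by
  let := upgradeStandardBorel X
  have hS (m : ℕ) : AnalyticSet {x | (m : ℕ∞) ≤ {y | (x, y) ∈ E}.encard} := by
    rw [← fst_image_sectionTuples]
    exact (measurableSet_sectionTuples hE m).analyticSet_image measurable_fst
  obtain ⟨B, hBm, hSB, hB⟩ := AnalyticSet.measurablySeparableFamily hS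
    (eq_empty_of_forall_notMem fun x hx => by
      obtain ⟨m, hm⟩ := ENat.exists_nat_gt (hfin x).encard_lt_top.ne
      exact (mem_iInter.1 hx m).not_gt hm)
  have hcover : E = ⋃ m, E ∩ Prod.fst ⁻¹' (B m)ᶜ := by
    rw [← inter_iUnion, ← preimage_iUnion, ← compl_iInter, hB, compl_empty, preimage_univ,
      inter_univ]
  rw [hcover]
  refine .iUnion fun m => isCountableUnionOfMeasurableGraphs_of_encard_le m
    (hE.inter (measurable_fst (hBm m).compl))
    (encard_setOf_mem_inter_preimage_fst_le fun x hx => ?_)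
  exact (not_le.1 fun h => hx (hSB m h)).le

/-- **Lusin–Novikov theorem**. -/
theorem isCountableUnionOfMeasurableGraphs_of_finite_sections [MeasurableSpace Y]
    [StandardBorelSpace Y] {E : Set (X × Y)} (hE : MeasurableSet E)
    (hfin : ∀ x, {y | (x, y) ∈ E}.Finite) : IsCountableUnionOfMeasurableGraphs E := by
  obtain ⟨e, he⟩ := exists_measurableEmbedding_real Y
  have hemb : MeasurableEmbedding (Prod.map id e : X × Y → X × ℝ) :=
    MeasurableEmbedding.id.prodMap he
  have hE' := isCountableUnionOfMeasurableGraphs_of_finite_sections_real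
    (hemb.measurableSet_image.2 hE) fun x => ((hfin x).image e).subset ?_
  · simpa [preimage_image_eq _ hemb.injective] using
      hE'.preimage_prodMap he.measurable he.injective
  · rintro _ ⟨⟨x', y⟩, hy, h⟩
    obtain ⟨rfl, rfl⟩ := Prod.mk.inj h
    exact mem_image_of_mem e hy

end Sections

section Matching

variable {V : Type*}

def IsMatching (M : Set (V × V)) : Prop :=
  (∀ p ∈ M, p.swap ∈ M) ∧ InjOn Prod.fst M

lemma isMatching_empty : IsMatching (∅ : Set (V × V)) := by
  simp [IsMatching]

lemma isMatching_union_preimage_swap {N : Set (V × V)} {A B : Set V} (hAB : Disjoint A B)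
    (hN : N ⊆ A ×ˢ B) (hfst : InjOn Prod.fst N) (hsnd : InjOn Prod.snd N) :
    IsMatching (N ∪ Prod.swap ⁻¹' N) := by
  refine ⟨fun p hp => by simpa [or_comm] using hp, ?_⟩
  have hcross : ∀ p ∈ N, ∀ q ∈ Prod.swap ⁻¹' N, p.1 ≠ q.1 := fun p hp q hq =>
    hAB.ne_of_mem (hN hp).1 (hN hq).2
  rintro p (hp | hp) q (hq | hq) hpq
  · exact hfst hp hq hpq
  · exact absurd hpq (hcross p hp q hq)
  · exact absurd hpq.symm (hcross q hq p hp)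
  · exact Prod.swap_injective (hsnd hp hq hpq)

lemma IsMatching.disjointed {M : ℕ → Set (V × V)} (hM : ∀ n, IsMatching (M n)) (n : ℕ) :
    IsMatching (disjointed M n) :=
  ⟨disjointedRec (p := fun t : Set (V × V) => ∀ q ∈ t, q.swap ∈ t)
    (fun _ i ht q hq => (mem_sdiff _).2
      ⟨ht q hq.1, fun h => hq.2 (by simpa using (hM i).1 _ h)⟩) (hM n).1,
    (hM n).2.mono (disjointed_subset M n)⟩

theorem exists_pairwise_disjoint_matchings_of_sUnion [MeasurableSpace V]
    {𝓜 : Set (Set (V × V))} (hc : 𝓜.Countable) (h𝓜 : ∀ M ∈ 𝓜, MeasurableSet M ∧ IsMatching M) :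
    ∃ M : ℕ → Set (V × V), (∀ n, MeasurableSet (M n) ∧ IsMatching (M n)) ∧
      Pairwise (Disjoint on M) ∧ ⋃ n, M n = ⋃₀ 𝓜 := by
  obtain ⟨f, hf⟩ := (hc.insert ∅).exists_eq_range (insert_nonempty _ _)
  have hfM (n : ℕ) : MeasurableSet (f n) ∧ IsMatching (f n) := by
    rcases (hf ▸ mem_range_self n : f n ∈ insert ∅ 𝓜) with h | h
    · exact h ▸ ⟨.empty, isMatching_empty⟩
    · exact h𝓜 _ h
  refine ⟨disjointed f, fun n => ⟨.disjointed (fun n => (hfM n).1) n,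
    .disjointed (fun n => (hfM n).2) n⟩, disjoint_disjointed f, ?_⟩
  rw [iUnion_disjointed, ← sUnion_range, ← hf, sUnion_insert, empty_union]

theorem SimpleGraph.exists_countable_measurable_matchings [MeasurableSpace V]
    [StandardBorelSpace V] (G : SimpleGraph V) (hlf : ∀ x, (G.neighborSet x).Finite)
    (hE : MeasurableSet {p : V × V | G.Adj p.1 p.2}) :
    ∃ 𝓜 : Set (Set (V × V)), 𝓜.Countable ∧ (∀ M ∈ 𝓜, MeasurableSet M ∧ IsMatching M) ∧
      ⋃₀ 𝓜 = {p | G.Adj p.1 p.2} := by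
  obtain ⟨𝓕, h𝓕c, h𝓕, h𝓕E⟩ := isCountableUnionOfMeasurableGraphs_of_finite_sections hE hlf
  obtain ⟨e, he⟩ := exists_measurableEmbedding_real V
  let N : Set (V × V) × Set (V × V) × ℚ → Set (V × V) := fun c =>
    c.1 ∩ Prod.swap ⁻¹' c.2.1 ∩ ((e ⁻¹' Iio (c.2.2 : ℝ)) ×ˢ (e ⁻¹' Ioi (c.2.2 : ℝ)))
  have hmem (p : V × V) (hp : G.Adj p.1 p.2) : ∃ F ∈ 𝓕, p ∈ F := by
    rwa [← mem_sUnion, h𝓕E]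
  have hN (p : V × V) (hp : G.Adj p.1 p.2) (hlt : e p.1 < e p.2) :
      ∃ c ∈ 𝓕 ×ˢ 𝓕 ×ˢ univ, p ∈ N c := by
    obtain ⟨F, hF, hpF⟩ := hmem p hp
    obtain ⟨F', hF', hpF'⟩ := hmem p.swap hp.symm
    obtain ⟨q, hpq, hqp⟩ := exists_rat_btwn hlt
    exact ⟨(F, F', q), ⟨hF, hF', trivial⟩, ⟨hpF, hpF'⟩, hpq, hqp⟩
  refine ⟨(fun c => N c ∪ Prod.swap ⁻¹' N c) '' (𝓕 ×ˢ 𝓕 ×ˢ univ),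
    (h𝓕c.prod (h𝓕c.prod countable_univ)).image _, ?_, ?_⟩
  · rintro _ ⟨⟨F, F', q⟩, ⟨hF, hF', -⟩, rfl⟩
    have hNm : MeasurableSet (N (F, F', q)) :=
      ((h𝓕 F hF).1.inter (measurable_swap (h𝓕 F' hF').1)).inter
        ((he.measurable measurableSet_Iio).prod (he.measurable measurableSet_Ioi))
    exact ⟨hNm.union (measurable_swap hNm), isMatching_union_preimage_swap
      ((Ioi_disjoint_Iio_of_le le_rfl).symm.preimage e) inter_subset_right
      ((h𝓕 F hF).2.mono fun p hp => hp.1.1)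
      fun p hp p' hp' h => Prod.swap_injective ((h𝓕 F' hF').2 hp.1.2 hp'.1.2 h)⟩
  · refine Subset.antisymm (sUnion_subset ?_) fun p hp => ?_
    · rintro _ ⟨c, ⟨hF, -, -⟩, rfl⟩
      have : N c ⊆ {p | G.Adj p.1 p.2} := fun p hp => h𝓕E ▸ mem_sUnion_of_mem hp.1.1 hF
      exact union_subset this fun p hp => (this hp).symm
    · rcases lt_or_gt_of_ne (he.injective.ne (G.ne_of_adj hp)) with hlt | hlt
      · obtain ⟨c, hc, hpc⟩ := hN p hp hlt
        exact ⟨_, ⟨c, hc, rfl⟩, .inl hpc⟩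
      · obtain ⟨c, hc, hpc⟩ := hN p.swap hp.symm hlt
        exact ⟨_, ⟨c, hc, rfl⟩, .inr hpc⟩

end Matching

/-- The edge set of every locally finite Borel graph can be partitioned into
countably many Borel matchings. -/
theorem stmt_13 {V : Type*} [MeasurableSpace V] [StandardBorelSpace V]
    (G : SimpleGraph V) (hlf : ∀ x : V, (G.neighborSet x).Finite)
    (hE : MeasurableSet {p : V × V | G.Adj p.1 p.2}) :
    ∃ M : ℕ → Set (V × V),
      (∀ n, MeasurableSet (M n)) ∧
      (∀ n, ∀ p ∈ M n, (p.2, p.1) ∈ M n) ∧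
      (∀ n, ∀ x y z : V, (x, y) ∈ M n → (x, z) ∈ M n → y = z) ∧
      (Pairwise fun m n => Disjoint (M m) (M n)) ∧
      (⋃ n, M n) = {p : V × V | G.Adj p.1 p.2} := by
  obtain ⟨𝓜, hc, h𝓜, hE𝓜⟩ := G.exists_countable_measurable_matchings hlf hE
  obtain ⟨M, hM, hdisj, hunion⟩ := exists_pairwise_disjoint_matchings_of_sUnion hc h𝓜
  refine ⟨M, fun n => (hM n).1, fun n => (hM n).2.1, fun n x y z hy hz => ?_, hdisj,
    hunion.trans hE𝓜⟩
  exact congrArg Prod.snd ((hM n).2.2 hy hz rfl)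
end

section
/- Every Borel graph 𝒢 with finite maximum degree d satisfies χ'_B(𝒢) ≤ 2d − 1, i.e. there exists a symmetric Borel map c : E → {0,…,2d−2} such that any two distinct edges sharing a vertex get different colours. -/
/-!
Since every vertex has at most `d` neighbours, the Lusin–Novikov argument writes the
neighbourhood relation as the union of finitely many graphs of Borel partial functions. Using a
countable basis of a compatible Polish topology, this yields a Borel colouring `c₀ : V → ℕ`
separating any two vertices with a common neighbour, so the level `c₀ x + c₀ y` separates any
two edges sharing a vertex. Colouring the edges level by level, each edge greedily takes the
least colour unused by the adjacent edges of lower level; an edge `xy` has at most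
`(d - 1) + (d - 1)` adjacent edges, so one of the colours `0, …, 2d - 2` is always free, and
each level is a Borel function of the finitely many lower ones.
-/

open MeasureTheory Set Function

theorem Nat.sInf_compl_le_ncard {s : Set ℕ} (hs : s.Finite) : sInf sᶜ ≤ s.ncard := by
  by_contra! h
  have hsub : (Finset.range (s.ncard + 1) : Set ℕ) ⊆ s := fun m hm => by
    by_contra hms
    have := Nat.sInf_le (show m ∈ sᶜ from hms)
    simp only [Finset.coe_range, mem_Iio] at hm
    omega
  have := Set.ncard_le_ncard hsub hs
  simp at this

theorem measurable_sInf_compl {α : Type*} [MeasurableSpace α] {U : α → Set ℕ}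
    (hU : ∀ n, MeasurableSet {x | n ∈ U x}) (hne : ∀ x, (U x)ᶜ.Nonempty) :
    Measurable fun x => sInf (U x)ᶜ := by
  simp_rw [Nat.sInf_def (hne _)]
  convert measurable_find hne fun n => (hU n).compl

theorem StrictMono.range_eq_of_ncard_le {α : Type*} [LinearOrder α] {k : ℕ} {v : Fin k → α}
    {s : Set α} (hv : StrictMono v) (hvs : ∀ i, v i ∈ s) (hs : s.Finite) (hk : s.ncard ≤ k) :
    range v = s :=
  eq_of_subset_of_ncard_le (range_subset_iff.2 hvs)
    (by rwa [ncard_range_of_injective hv.injective, Nat.card_eq_fintype_card, Fintype.card_fin])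
    hs

section FiniteSections

variable {V : Type*} [MeasurableSpace V] [StandardBorelSpace V] {B : Set (V × ℝ)}

theorem exists_measurable_enumeration_of_ncard_le {k : ℕ} (hB : MeasurableSet B)
    (hfin : ∀ x, {t | (x, t) ∈ B}.Finite) (hcard : ∀ x, {t | (x, t) ∈ B}.ncard ≤ k) :
    ∃ A : Set V, MeasurableSet A ∧ ∃ u : V → Fin k → ℝ, Measurable u ∧
      (∀ x ∈ A, range (u x) = {t | (x, t) ∈ B}) ∧ ∀ x ∉ A, {t | (x, t) ∈ B}.ncard ≠ k := by
  set W : Set (V × (Fin k → ℝ)) := {q | StrictMono q.2 ∧ ∀ i, (q.1, q.2 i) ∈ B}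
  have hW : MeasurableSet W := by
    refine measurableSet_setOfPred.2 (.and ?_ (Measurable.forall fun i => hB.mem.comp ?_))
    · exact Measurable.forall fun i => Measurable.forall fun j =>
        measurable_const.imp (measurableSet_lt (f := fun q : V × (Fin k → ℝ) => q.2 i)
          (g := fun q => q.2 j) (by fun_prop) (by fun_prop)).mem
    · fun_prop
  -- `W` projects injectively, hence (Lusin–Souslin) Borel-isomorphically, onto the points whose
  -- section has exactly `k` elements, since a tuple in `W` must enumerate its whole section.
  have hrange : ∀ q ∈ W, range q.2 = {t | (q.1, t) ∈ B} := fun q hq =>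
    hq.1.range_eq_of_ncard_le hq.2 (hfin _) (hcard _)
  have : StandardBorelSpace W := hW.standardBorel
  have hφ : MeasurableEmbedding fun q : W => q.1.1 := by
    refine Measurable.measurableEmbedding (by fun_prop) fun q q' h => Subtype.ext (Prod.ext h ?_)
    refine (q.2.1.range_inj q'.2.1).1 ?_
    rw [hrange q q.2, hrange q' q'.2, h]
  obtain ⟨u, hu, hφu⟩ := hφ.exists_measurable_extend (g := fun q : W => q.1.2) (by fun_prop)
    fun _ => inferInstance
  refine ⟨range fun q : W => q.1.1, hφ.measurableSet_range, u, hu, ?_, fun x hx hk => hx ?_⟩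
  · rintro _ ⟨q, rfl⟩
    rw [← hrange q q.2]
    exact congrArg range (congrFun hφu q)
  · have hs : (hfin x).toFinset.card = k := by rwa [← ncard_eq_toFinset_card _ (hfin x)]
    let e := (hfin x).toFinset.orderEmbOfFin hs
    exact ⟨⟨(x, e), e.strictMono,
      fun i => (hfin x).mem_toFinset.1 (Finset.orderEmbOfFin_mem _ hs i)⟩, rfl⟩

theorem exists_measurable_cover_of_ncard_sections_le (k : ℕ) (hB : MeasurableSet B)
    (hfin : ∀ x, {t | (x, t) ∈ B}.Finite) (hcard : ∀ x, {t | (x, t) ∈ B}.ncard ≤ k) :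
    ∃ (ι : Type) (_ : Finite ι) (D : ι → Set V) (g : ι → V → ℝ),
      (∀ i, MeasurableSet (D i)) ∧ (∀ i, Measurable (g i)) ∧
      ∀ x t, (x, t) ∈ B ↔ ∃ i, x ∈ D i ∧ g i x = t := by
  induction k generalizing B with
  | zero =>
    refine ⟨Empty, inferInstance, Empty.elim, Empty.elim, Empty.rec, Empty.rec, fun x t => ?_⟩
    have hempty := (ncard_eq_zero (hfin x)).1 (Nat.le_zero.1 (hcard x))
    simpa using (eq_empty_iff_forall_notMem.1 hempty t)
  | succ k ih =>
    obtain ⟨A, hA, u, hu, hAu, hnA⟩ := exists_measurable_enumeration_of_ncard_le hB hfin hcard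
    have hB' : MeasurableSet (B ∩ Prod.fst ⁻¹' Aᶜ) := hB.inter (measurable_fst hA.compl)
    have hcard' : ∀ x, {t | (x, t) ∈ B ∩ Prod.fst ⁻¹' Aᶜ}.ncard ≤ k := fun x => by
      by_cases hx : x ∈ A
      · simp [hx]
      · have := hcard x
        have := hnA x hx
        simp only [mem_inter_iff, mem_preimage, mem_compl_iff, hx, not_false_eq_true, and_true]
        omega
    obtain ⟨ι, _, D, g, hD, hg, hBDg⟩ := ih hB' (fun x => (hfin x).subset fun _ ht => ht.1) hcard'
    refine ⟨ι ⊕ Fin (k + 1), inferInstance, Sum.elim D fun _ => A, Sum.elim g fun i x => u x i,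
      Sum.forall.2 ⟨hD, fun _ => hA⟩, Sum.forall.2 ⟨hg, fun i => (measurable_pi_apply i).comp hu⟩,
      fun x t => ?_⟩
    simp only [Sum.exists, Sum.elim_inl, Sum.elim_inr, ← hBDg]
    by_cases hx : x ∈ A
    · simp only [hx, mem_inter_iff, mem_preimage, mem_compl_iff, not_true_eq_false, and_false,
        true_and, false_or]
      exact (Set.ext_iff.1 (hAu x hx) t).symm
    · simp [hx]

end FiniteSections

theorem SimpleGraph.exists_measurable_neighbor_functions {V : Type*} [MeasurableSpace V]
    [StandardBorelSpace V] (G : SimpleGraph V) {d : ℕ} (hlf : ∀ x, (G.neighborSet x).Finite)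
    (hdeg : ∀ x, (G.neighborSet x).ncard ≤ d) (hE : MeasurableSet {p : V × V | G.Adj p.1 p.2}) :
    ∃ (ι : Type) (_ : Finite ι) (D : ι → Set V) (F : ι → V → V),
      (∀ i, MeasurableSet (D i)) ∧ (∀ i, Measurable (F i)) ∧
      ∀ x y, G.Adj x y ↔ ∃ i, x ∈ D i ∧ F i x = y := by
  rcases isEmpty_or_nonempty V with hV | hV
  · exact ⟨Empty, inferInstance, Empty.elim, Empty.elim, Empty.rec, Empty.rec, isEmptyElim⟩
  have hf := measurableEmbedding_embeddingReal V
  set f := embeddingReal V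
  set B := Prod.map id f '' {p : V × V | G.Adj p.1 p.2}
  have hB : MeasurableSet B := (MeasurableEmbedding.id.prodMap hf).measurableSet_image.2 hE
  have hsec : ∀ x, {t | (x, t) ∈ B} = f '' G.neighborSet x := fun x => by
    ext t
    simp [B, f]
  obtain ⟨ι, _, D, g, hD, hg, hBg⟩ := exists_measurable_cover_of_ncard_sections_le d hB
    (fun x => hsec x ▸ (hlf x).image f)
    (fun x => by rw [hsec, ncard_image_of_injective _ hf.injective]; exact hdeg x)
  obtain ⟨finv, hfinv, hfinv_f⟩ := hf.exists_measurable_extend measurable_id fun _ => hV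
  refine ⟨ι, ‹_›, D, fun i => finv ∘ g i, hD, fun i => hfinv.comp (hg i), fun x y => ?_⟩
  have hadj : G.Adj x y ↔ (x, f y) ∈ B := by
    rw [← mem_ofPred (p := fun t => (x, t) ∈ B), hsec, hf.injective.mem_set_image, mem_neighborSet]
  rw [hadj, hBg]
  refine exists_congr fun i => and_congr_right fun hx => ?_
  obtain ⟨z, -, hz⟩ : g i x ∈ f '' G.neighborSet x := hsec x ▸ (hBg x _).2 ⟨i, hx, rfl⟩
  change g i x = f y ↔ finv (g i x) = y
  rw [← hz, hf.injective.eq_iff, show finv (f z) = z from congrFun hfinv_f z]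

theorem exists_seq_measurableSet_separating_finite {V : Type*} [MeasurableSpace V]
    [StandardBorelSpace V] :
    ∃ S : ℕ → Set V, (∀ n, MeasurableSet (S n)) ∧
      ∀ x (T : Set V), T.Finite → x ∉ T → ∃ n, x ∈ S n ∧ Disjoint (S n) T := by
  let := upgradeStandardBorel V
  obtain ⟨b, hbc, -, hb⟩ := TopologicalSpace.exists_countable_basis V
  refine ⟨enumerateCountable hbc ∅, fun n => ?_, fun x T hT hxT => ?_⟩
  · rcases range_enumerateCountable_subset hbc ∅ ⟨n, rfl⟩ with h | h
    · rw [h]; exact .empty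
    · exact (hb.isOpen h).measurableSet
  · obtain ⟨s, hs, hxs, hsT⟩ := hb.exists_subset_of_mem_open hxT hT.isClosed.isOpen_compl
    obtain ⟨n, rfl⟩ := subset_range_enumerate hbc ∅ hs
    exact ⟨n, hxs, subset_compl_iff_disjoint_right.1 hsT⟩

theorem exists_measurable_nat_coloring {V : Type*} [MeasurableSpace V] [StandardBorelSpace V]
    {ι : Type*} [Finite ι] {D : ι → Set V} {F : ι → V → V} (hD : ∀ i, MeasurableSet (D i))
    (hF : ∀ i, Measurable (F i)) :
    ∃ c : V → ℕ, Measurable c ∧ ∀ i, ∀ x ∈ D i, F i x ≠ x → c (F i x) ≠ c x := by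
  classical
  obtain ⟨S, hS, hsep⟩ := exists_seq_measurableSet_separating_finite (V := V)
  let good (x : V) (n : ℕ) : Prop := x ∈ S n ∧ ∀ i, x ∈ D i → F i x ≠ x → F i x ∉ S n
  have hgood : ∀ x, ∃ n, good x n := fun x => by
    obtain ⟨n, hxn, hdisj⟩ := hsep x ((fun i => F i x) '' {i | x ∈ D i ∧ F i x ≠ x})
      (toFinite _) fun ⟨i, hi, hix⟩ => hi.2 hix
    exact ⟨n, hxn, fun i hi hne hFn => hdisj.ne_of_mem hFn ⟨i, ⟨hi, hne⟩, rfl⟩ rfl⟩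
  have hgood_meas : ∀ n, MeasurableSet {x | good x n} := fun n => by
    refine measurableSet_setOfPred.2 ((hS n).mem.and (Measurable.forall fun i => ?_))
    have := hD i
    have := hF i
    have := hS n
    fun_prop
  refine ⟨fun x => Nat.find (hgood x), measurable_find hgood hgood_meas, fun i x hx hne heq => ?_⟩
  have hFx := (Nat.find_spec (hgood (F i x))).1
  rw [show Nat.find (hgood (F i x)) = Nat.find (hgood x) from heq] at hFx
  exact (Nat.find_spec (hgood x)).2 i hx hne hFx

namespace SimpleGraph

variable {V : Type*} (G : SimpleGraph V)

def adjacentPairs (p : V × V) : Set (V × V) :=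
  Prod.mk p.1 '' (G.neighborSet p.1 \ {p.2}) ∪ Prod.mk p.2 '' (G.neighborSet p.2 \ {p.1})

noncomputable def greedyEdgeColoring (lvl : V × V → ℕ) (p : V × V) : ℕ :=
  sInf {c | ∀ q ∈ G.adjacentPairs p, lvl q < lvl p → greedyEdgeColoring lvl q ≠ c}
termination_by lvl p

variable {G}

lemma mem_adjacentPairs {p q : V × V} :
    q ∈ G.adjacentPairs p ↔ (q.1 = p.1 ∧ G.Adj p.1 q.2 ∧ q.2 ≠ p.2) ∨
      (q.1 = p.2 ∧ G.Adj p.2 q.2 ∧ q.2 ≠ p.1) := by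
  obtain ⟨a, b⟩ := q
  simp only [adjacentPairs, mem_union, mem_image, mem_sdiff, mem_neighborSet, mem_singleton_iff,
    Prod.mk.injEq]
  constructor
  · rintro (⟨z, ⟨hz, hne⟩, rfl, rfl⟩ | ⟨z, ⟨hz, hne⟩, rfl, rfl⟩)
    exacts [Or.inl ⟨rfl, hz, hne⟩, Or.inr ⟨rfl, hz, hne⟩]
  · rintro (⟨rfl, hz, hne⟩ | ⟨rfl, hz, hne⟩)
    exacts [Or.inl ⟨b, ⟨hz, hne⟩, rfl, rfl⟩, Or.inr ⟨b, ⟨hz, hne⟩, rfl, rfl⟩]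

lemma adjacentPairs_swap (p : V × V) : G.adjacentPairs p.swap = G.adjacentPairs p :=
  union_comm _ _

lemma adjacentPairs_finite (hlf : ∀ x, (G.neighborSet x).Finite) (p : V × V) :
    (G.adjacentPairs p).Finite :=
  ((hlf _).sdiff.image _).union ((hlf _).sdiff.image _)

lemma ncard_adjacentPairs_add_two_le (hlf : ∀ x, (G.neighborSet x).Finite) {x y : V}
    (h : G.Adj x y) :
    (G.adjacentPairs (x, y)).ncard + 2 ≤ (G.neighborSet x).ncard + (G.neighborSet y).ncard := by
  have hx := ncard_sdiff_singleton_of_mem ((G.mem_neighborSet x y).2 h)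
  have hy := ncard_sdiff_singleton_of_mem ((G.mem_neighborSet y x).2 h.symm)
  have hx0 := (ncard_pos (hlf x)).2 ⟨y, h⟩
  have hy0 := (ncard_pos (hlf y)).2 ⟨x, h.symm⟩
  have : (G.adjacentPairs (x, y)).ncard ≤
      (G.neighborSet x \ {y}).ncard + (G.neighborSet y \ {x}).ncard :=
    (ncard_union_le _ _).trans
      (add_le_add (ncard_image_le (hlf x).sdiff) (ncard_image_le (hlf y).sdiff))
  omega

variable (lvl : V × V → ℕ)

lemma greedyEdgeColoring_eq (p : V × V) :
    G.greedyEdgeColoring lvl p =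
      sInf (G.greedyEdgeColoring lvl '' {q ∈ G.adjacentPairs p | lvl q < lvl p})ᶜ := by
  rw [greedyEdgeColoring]
  congr 1
  ext c
  simp [and_imp]

variable {lvl}

lemma greedyEdgeColoring_le (hlf : ∀ x, (G.neighborSet x).Finite) (p : V × V) :
    G.greedyEdgeColoring lvl p ≤ (G.adjacentPairs p).ncard := by
  have hfin := (adjacentPairs_finite hlf p).sep fun q => lvl q < lvl p
  rw [greedyEdgeColoring_eq]
  exact (Nat.sInf_compl_le_ncard (hfin.image _)).trans
    ((ncard_image_le hfin).trans (ncard_le_ncard (sep_subset _ _) (adjacentPairs_finite hlf p)))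

lemma greedyEdgeColoring_ne_of_lt (hlf : ∀ x, (G.neighborSet x).Finite) {p q : V × V}
    (hq : q ∈ G.adjacentPairs p) (hlt : lvl q < lvl p) :
    G.greedyEdgeColoring lvl p ≠ G.greedyEdgeColoring lvl q := by
  have hfin := ((adjacentPairs_finite hlf p).sep fun q => lvl q < lvl p).image
    (G.greedyEdgeColoring lvl)
  have hmem := Nat.sInf_mem hfin.infinite_compl.nonempty
  rw [← greedyEdgeColoring_eq] at hmem
  rintro heq
  exact hmem ⟨q, ⟨hq, hlt⟩, heq.symm⟩

lemma greedyEdgeColoring_swap (hlvl : ∀ p, lvl p.swap = lvl p) (p : V × V) :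
    G.greedyEdgeColoring lvl p.swap = G.greedyEdgeColoring lvl p := by
  rw [greedyEdgeColoring_eq, greedyEdgeColoring_eq lvl p, adjacentPairs_swap, hlvl]

lemma greedyEdgeColoring_ne (hlf : ∀ x, (G.neighborSet x).Finite) {x y z : V}
    (hxy : G.Adj x y) (hxz : G.Adj x z) (hlvl : lvl (x, y) ≠ lvl (x, z)) :
    G.greedyEdgeColoring lvl (x, y) ≠ G.greedyEdgeColoring lvl (x, z) := by
  have hyz : y ≠ z := by rintro rfl; exact hlvl rfl
  rcases hlvl.lt_or_gt with h | h
  · exact (greedyEdgeColoring_ne_of_lt hlf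
      (mem_adjacentPairs (p := (x, z)) (q := (x, y)).2 (.inl ⟨rfl, hxy, hyz⟩)) h).symm
  · exact greedyEdgeColoring_ne_of_lt hlf
      (mem_adjacentPairs (p := (x, y)) (q := (x, z)).2 (.inl ⟨rfl, hxz, hyz.symm⟩)) h

section Measurability

variable [MeasurableSpace V] [MeasurableEq V] {ι : Type*} [Countable ι] {D : ι → Set V}
  {F : ι → V → V}

lemma measurableSet_exists_mem_adjacentPairs (hD : ∀ i, MeasurableSet (D i))
    (hF : ∀ i, Measurable (F i)) (hadj : ∀ x y, G.Adj x y ↔ ∃ i, x ∈ D i ∧ F i x = y)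
    {Q : Set (V × V)} (hQ : MeasurableSet Q) :
    MeasurableSet {p | ∃ q ∈ G.adjacentPairs p, q ∈ Q} := by
  have hside :
      MeasurableSet {p : V × V | ∃ i, p.1 ∈ D i ∧ F i p.1 ≠ p.2 ∧ (p.1, F i p.1) ∈ Q} := by
    refine measurableSet_setOfPred.2 (Measurable.exists fun i => ?_)
    have := hD i
    have := hF i
    fun_prop
  convert hside.union (measurable_swap hside) using 1
  ext ⟨x, y⟩
  simp only [mem_ofPred_eq, mem_union, mem_preimage, Prod.swap, mem_adjacentPairs, hadj]
  constructor
  · rintro ⟨q, (⟨rfl, ⟨i, hi, hq⟩, hne⟩ | ⟨rfl, ⟨i, hi, hq⟩, hne⟩), hQ⟩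
    exacts [.inl ⟨i, hi, hq ▸ hne, hq ▸ hQ⟩, .inr ⟨i, hi, hq ▸ hne, hq ▸ hQ⟩]
  · rintro (⟨i, hi, hne, hQ⟩ | ⟨i, hi, hne, hQ⟩)
    exacts [⟨_, .inl ⟨rfl, ⟨i, hi, rfl⟩, hne⟩, hQ⟩, ⟨_, .inr ⟨rfl, ⟨i, hi, rfl⟩, hne⟩, hQ⟩]

lemma measurable_greedyEdgeColoring (hlf : ∀ x, (G.neighborSet x).Finite)
    (hD : ∀ i, MeasurableSet (D i)) (hF : ∀ i, Measurable (F i))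
    (hadj : ∀ x y, G.Adj x y ↔ ∃ i, x ∈ D i ∧ F i x = y) (hlvl : Measurable lvl) :
    Measurable (G.greedyEdgeColoring lvl) := by
  set c := G.greedyEdgeColoring lvl
  have hbelow : ∀ n k, MeasurableSet {p | lvl p < n ∧ c p = k} := by
    intro n
    induction n with
    | zero => simp
    | succ n ih =>
      intro k
      have hnext : Measurable fun p => sInf (c '' {q ∈ G.adjacentPairs p | lvl q < n})ᶜ := by
        refine measurable_sInf_compl (fun m => ?_) fun p =>
          (((adjacentPairs_finite hlf p).sep _).image c).infinite_compl.nonempty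
        convert measurableSet_exists_mem_adjacentPairs hD hF hadj (ih m) using 1
        ext p
        simp only [mem_image, mem_ofPred_eq, and_assoc]
      convert (ih k).union ((hlvl (measurableSet_singleton n)).inter
        (hnext (measurableSet_singleton k))) using 1
      ext p
      by_cases h : lvl p = n
      · simp [c, h, greedyEdgeColoring_eq lvl p]
      · simp only [mem_ofPred_eq, mem_union, mem_inter_iff, mem_preimage, mem_singleton_iff, h,
          false_and, or_false]
        omega
  refine measurable_to_countable' fun k => ?_
  convert MeasurableSet.iUnion fun n => hbelow n k using 1
  ext p
  simp only [mem_preimage, mem_singleton_iff, mem_iUnion, mem_ofPred_eq]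
  exact ⟨fun h => ⟨lvl p + 1, lt_add_one _, h⟩, fun ⟨_, _, h⟩ => h⟩

end Measurability

end SimpleGraph

/-- Every Borel graph with maximum degree at most `d` admits a Borel proper edge
colouring with `2d − 1` colours: a symmetric Borel map on edges, with values
in `{0, …, 2d−2}`, such that any two distinct edges sharing a vertex get different
colours. -/
theorem stmt_15 {V : Type*} [MeasurableSpace V] [StandardBorelSpace V]
    (G : SimpleGraph V) (d : ℕ)
    (hlf : ∀ x : V, (G.neighborSet x).Finite)
    (hdeg : ∀ x : V, (G.neighborSet x).ncard ≤ d)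
    (hE : MeasurableSet {p : V × V | G.Adj p.1 p.2}) :
    ∃ c : V × V → ℕ, Measurable c ∧
      (∀ x y : V, G.Adj x y → c (x, y) < 2 * d - 1) ∧
      (∀ x y : V, G.Adj x y → c (x, y) = c (y, x)) ∧
      (∀ x y z : V, G.Adj x y → G.Adj x z → y ≠ z → c (x, y) ≠ c (x, z)) := by
  obtain ⟨ι, _, D, F, hD, hF, hadj⟩ := G.exists_measurable_neighbor_functions hlf hdeg hE
  obtain ⟨c₀, hc₀, hc₀F⟩ := exists_measurable_nat_coloring (ι := ι × ι)
    (D := fun ij => D ij.2 ∩ F ij.2 ⁻¹' D ij.1) (F := fun ij => F ij.1 ∘ F ij.2)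
    (fun _ => (hD _).inter (hF _ (hD _))) (fun _ => (hF _).comp (hF _))
  have hc₀ne : ∀ x y z, G.Adj x y → G.Adj x z → y ≠ z → c₀ y ≠ c₀ z := by
    intro x y z hxy hxz hyz
    obtain ⟨j, hy, rfl⟩ := (hadj y x).1 hxy.symm
    obtain ⟨i, hx, rfl⟩ := (hadj _ z).1 hxz
    exact (hc₀F (i, j) y ⟨hy, hx⟩ hyz.symm).symm
  let lvl : V × V → ℕ := fun p => c₀ p.1 + c₀ p.2
  refine ⟨G.greedyEdgeColoring lvl, G.measurable_greedyEdgeColoring hlf hD hF hadj (by fun_prop),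
    fun x y hxy => ?_, fun x y _ => (G.greedyEdgeColoring_swap (fun _ => add_comm _ _) (x, y)).symm,
    fun x y z hxy hxz hyz => G.greedyEdgeColoring_ne hlf hxy hxz fun h =>
      hc₀ne x y z hxy hxz hyz (Nat.add_left_cancel h)⟩
  have := G.greedyEdgeColoring_le (lvl := lvl) hlf (x, y)
  have := G.ncard_adjacentPairs_add_two_le hlf hxy
  have := hdeg x
  have := hdeg y
  omega
end
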